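/- Let m and n be positive integers with m < n, and let ⊗ : U_m × U_n → U_{mn} be the Kronecker product homomorphism. Then for every 1 ≤ i < 2m, every x ∈ π_i(U_m) and every y ∈ π_i(U_n), one has π_i(⊗)(x,y) = n • π_i(σ_m)(x) + m • π_i(σ_n)(y) in the abelian group π_i(U_{mn}) (written additively), where σ_m : U_m → U_{mn} is A ↦ diag(A, I_{mn−m}) and σ_n : U_n → U_{mn} is B ↦ diag(B, I_{mn−n}), and • denotes integer multiples. -/

import Mathlib

open Matrix Kronecker unitInterval Topology

noncomputable section

/-- The unitary group `U_n` of `n × n` complex matrices, with the subspace topology,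
based at the identity matrix. -/
abbrev U (n : ℕ) : Type := Matrix.unitaryGroup (Fin n) ℂ

namespace Paper

/-! ### Reindexing unitary matrices -/

/-- Reindexing a unitary matrix along an equivalence of index types. -/
def uReindex {ι κ : Type} [Fintype ι] [DecidableEq ι] [Fintype κ] [DecidableEq κ]
    (e : ι ≃ κ) (A : Matrix.unitaryGroup ι ℂ) : Matrix.unitaryGroup κ ℂ :=
  ⟨Matrix.reindex e e A.1, by
    rw [Matrix.mem_unitaryGroup_iff]
    have h : star ((Matrix.reindex e e) A.1) = Matrix.reindex e e (star A.1) := by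
      simp [Matrix.star_eq_conjTranspose, Matrix.reindex_apply, Matrix.conjTranspose_submatrix]
    rw [h, Matrix.reindex_apply, Matrix.reindex_apply, Matrix.submatrix_mul_equiv, A.2.2,
      Matrix.submatrix_one_equiv]⟩

@[simp] theorem uReindex_val {ι κ : Type} [Fintype ι] [DecidableEq ι] [Fintype κ] [DecidableEq κ]
    (e : ι ≃ κ) (A : Matrix.unitaryGroup ι ℂ) :
    (uReindex e A).1 = Matrix.reindex e e A.1 := rfl

theorem continuous_uReindex {ι κ : Type} [Fintype ι] [DecidableEq ι] [Fintype κ] [DecidableEq κ]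
    (e : ι ≃ κ) : Continuous (uReindex (e := e)) :=
  Continuous.subtype_mk ((continuous_subtype_val).matrix_reindex e e) _

@[simp] theorem uReindex_one {ι κ : Type} [Fintype ι] [DecidableEq ι] [Fintype κ] [DecidableEq κ]
    (e : ι ≃ κ) : uReindex e (1 : Matrix.unitaryGroup ι ℂ) = 1 :=
  Subtype.ext (by simp [uReindex, Matrix.reindex_apply, Matrix.submatrix_one_equiv])

/-- Transport along an equality of sizes. -/
def uCast {m k : ℕ} (h : m = k) (A : U m) : U k := uReindex (finCongr h) A

theorem continuous_uCast {m k : ℕ} (h : m = k) : Continuous (uCast h) :=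
  continuous_uReindex _

@[simp] theorem uCast_one {m k : ℕ} (h : m = k) : uCast h (1 : U m) = 1 := uReindex_one _

/-! ### Block sums and Kronecker products of unitary matrices -/

/-- The block sum `diag(A, B)` of unitary matrices, as an element of `U (m + n)`. -/
def bdiag2 {m n : ℕ} (A : U m) (B : U n) : U (m + n) :=
  ⟨Matrix.reindex finSumFinEquiv finSumFinEquiv (Matrix.fromBlocks A.1 0 0 B.1), by
    rw [Matrix.mem_unitaryGroup_iff]
    have h : star ((Matrix.reindex finSumFinEquiv finSumFinEquiv)
        (Matrix.fromBlocks A.1 0 0 B.1)) = Matrix.reindex finSumFinEquiv finSumFinEquiv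
        (star (Matrix.fromBlocks A.1 0 0 B.1)) := by
      simp [Matrix.star_eq_conjTranspose, Matrix.reindex_apply, Matrix.conjTranspose_submatrix]
    have hA : A.1 * A.1ᴴ = 1 := A.2.2
    have hB : B.1 * B.1ᴴ = 1 := B.2.2
    have h2 : Matrix.fromBlocks A.1 0 0 B.1 * star (Matrix.fromBlocks A.1 0 0 B.1) = 1 := by
      simp [Matrix.star_eq_conjTranspose, Matrix.fromBlocks_conjTranspose,
        Matrix.fromBlocks_multiply, hA, hB, Matrix.fromBlocks_one]
    rw [h, Matrix.reindex_apply, Matrix.reindex_apply, Matrix.submatrix_mul_equiv, h2,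
      Matrix.submatrix_one_equiv]⟩

@[simp] theorem bdiag2_one {m n : ℕ} : bdiag2 (1 : U m) (1 : U n) = 1 :=
  Subtype.ext (by simp [bdiag2, Matrix.fromBlocks_one, Matrix.reindex_apply,
    Matrix.submatrix_one_equiv])

theorem continuous_bdiag2 {m n : ℕ} :
    Continuous (fun p : U m × U n => bdiag2 p.1 p.2) := by
  apply Continuous.subtype_mk
  exact ((Continuous.matrix_fromBlocks (continuous_subtype_val.comp continuous_fst)
    continuous_const continuous_const
    (continuous_subtype_val.comp continuous_snd)).matrix_reindex _ _)

/-- The equivalence used to index an array of `r` blocks of size `n` by `Fin (r * n)`. -/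
def bde (r n : ℕ) : (Fin n × Fin r) ≃ Fin (r * n) :=
  (Equiv.prodComm (Fin n) (Fin r)).trans finProdFinEquiv

/-- The block-diagonal sum `diag(A 1, …, A r)` of a family of unitary matrices. -/
def blockDiagU {r n : ℕ} (A : Fin r → U n) : U (r * n) :=
  ⟨Matrix.reindex (bde r n) (bde r n) (Matrix.blockDiagonal fun j => (A j).1), by
    rw [Matrix.mem_unitaryGroup_iff]
    have h : star ((Matrix.reindex (bde r n) (bde r n))
        (Matrix.blockDiagonal fun j => (A j).1)) = Matrix.reindex (bde r n) (bde r n)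
        (star (Matrix.blockDiagonal fun j => (A j).1)) := by
      simp [Matrix.star_eq_conjTranspose, Matrix.reindex_apply, Matrix.conjTranspose_submatrix]
    have hA : ∀ j, (A j).1 * ((A j).1)ᴴ = 1 := fun j => (A j).2.2
    have h2 : (Matrix.blockDiagonal fun j => (A j).1) *
        star (Matrix.blockDiagonal fun j => (A j).1) = 1 := by
      rw [Matrix.star_eq_conjTranspose, Matrix.blockDiagonal_conjTranspose,
        ← Matrix.blockDiagonal_mul]
      have h1 : (fun k : Fin r => (A k).1 * ((A k).1)ᴴ) = (1 : Fin r → Matrix (Fin n) (Fin n) ℂ) :=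
        funext fun k => hA k
      rw [h1, Matrix.blockDiagonal_one]
    rw [h, Matrix.reindex_apply, Matrix.reindex_apply, Matrix.submatrix_mul_equiv, h2,
      Matrix.submatrix_one_equiv]⟩

@[simp] theorem blockDiagU_one {r n : ℕ} : blockDiagU (fun _ : Fin r => (1 : U n)) = 1 := by
  apply Subtype.ext
  have h1 : (fun _ : Fin r => ((1 : U n) : Matrix (Fin n) (Fin n) ℂ)) =
      (1 : Fin r → Matrix (Fin n) (Fin n) ℂ) := rfl
  show Matrix.reindex (bde r n) (bde r n) (Matrix.blockDiagonal _) = _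
  rw [h1, Matrix.blockDiagonal_one, Matrix.reindex_apply, Matrix.submatrix_one_equiv]
  rfl

theorem continuous_blockDiagU {X : Type} [TopologicalSpace X] {r n : ℕ} {A : X → Fin r → U n}
    (hA : ∀ j, Continuous fun x => A x j) : Continuous fun x => blockDiagU (A x) := by
  apply Continuous.subtype_mk
  exact (Continuous.matrix_blockDiagonal
    (continuous_pi fun j => (continuous_subtype_val.comp (hA j)))).matrix_reindex _ _

/-- The Kronecker product of unitary matrices, as an element of `U (m * n)`. -/
def kronU {m n : ℕ} (A : U m) (B : U n) : U (m * n) :=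
  ⟨Matrix.reindex finProdFinEquiv finProdFinEquiv (A.1 ⊗ₖ B.1), by
    rw [Matrix.mem_unitaryGroup_iff]
    have hstar : ∀ (C : Matrix (Fin m) (Fin m) ℂ) (D : Matrix (Fin n) (Fin n) ℂ),
        star (C ⊗ₖ D) = star C ⊗ₖ star D := by
      intro C D
      ext ⟨i, j⟩ ⟨k, l⟩
      simp [Matrix.star_eq_conjTranspose, Matrix.conjTranspose_apply,
        Matrix.kroneckerMap_apply, mul_comm]
    have h : star ((Matrix.reindex finProdFinEquiv finProdFinEquiv) (A.1 ⊗ₖ B.1)) =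
        Matrix.reindex finProdFinEquiv finProdFinEquiv (star (A.1 ⊗ₖ B.1)) := by
      simp [Matrix.star_eq_conjTranspose, Matrix.reindex_apply, Matrix.conjTranspose_submatrix]
    have h2 : (A.1 ⊗ₖ B.1) * star (A.1 ⊗ₖ B.1) = 1 := by
      rw [hstar, ← Matrix.mul_kronecker_mul, A.2.2, B.2.2, Matrix.one_kronecker_one]
    rw [h, Matrix.reindex_apply, Matrix.reindex_apply, Matrix.submatrix_mul_equiv, h2,
      Matrix.submatrix_one_equiv]⟩

@[simp] theorem kronU_one {m n : ℕ} : kronU (1 : U m) (1 : U n) = 1 :=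
  Subtype.ext (by simp [kronU, Matrix.one_kronecker_one, Matrix.reindex_apply,
    Matrix.submatrix_one_equiv])

theorem continuous_kronU {m n : ℕ} : Continuous fun p : U m × U n => kronU p.1 p.2 := by
  apply Continuous.subtype_mk
  apply Continuous.matrix_reindex _ finProdFinEquiv finProdFinEquiv
  apply continuous_matrix
  rintro ⟨i, j⟩ ⟨k, l⟩
  simp only [Matrix.kroneckerMap_apply]
  exact ((continuous_subtype_val.comp continuous_fst).matrix_elem i k).mul
    ((continuous_subtype_val.comp continuous_snd).matrix_elem j l)

/-! ### The induced map on homotopy groups -/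

/-- The map on generalized loops induced by a continuous basepoint-preserving map. -/
def loopMap {N : Type} {X Y : Type} [TopologicalSpace X] [TopologicalSpace Y]
    (f : C(X, Y)) {x : X} {y : Y} (hf : f x = y) (p : GenLoop N X x) : GenLoop N Y y :=
  ⟨f.comp p.1, fun t ht => by
    simp only [ContinuousMap.comp_apply]
    rw [p.2 t ht, hf]⟩

/-- The homomorphism `π_k(f)` induced on homotopy groups (based at the given points) by a
continuous basepoint-preserving map `f`, as a function. -/
def πMap (k : ℕ) {X Y : Type} [TopologicalSpace X] [TopologicalSpace Y]
    (f : C(X, Y)) {x : X} {y : Y} (hf : f x = y) :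
    HomotopyGroup (Fin k) X x → HomotopyGroup (Fin k) Y y :=
  Quotient.map (loopMap f hf)
    (fun _ _ h => h.elim fun H => ⟨H.compContinuousMap f⟩)

end Paper
/-! ### The standard stabilization and operation maps, as continuous maps -/

namespace Paper

/-- `est_{m,n} : U_m → U_{m+n}`, `A ↦ diag(A, I_n)`. -/
def est (m n : ℕ) : C(U m, U (m + n)) :=
  ⟨fun A => bdiag2 A 1, continuous_bdiag2.comp (continuous_id.prodMk continuous_const)⟩

theorem est_one (m n : ℕ) : est m n 1 = 1 := bdiag2_one

/-- `U_n → U_{m+n}`, `B ↦ diag(I_m, B)`. -/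
def est' (m n : ℕ) : C(U n, U (m + n)) :=
  ⟨fun B => bdiag2 1 B, continuous_bdiag2.comp (continuous_const.prodMk continuous_id)⟩

theorem est'_one (m n : ℕ) : est' m n 1 = 1 := bdiag2_one

/-- `s_j : U_n → U_{rn}` placing `A` in the `j`-th diagonal block (0-indexed) and identity
blocks elsewhere. -/
def sMap (n r : ℕ) (j : Fin r) : C(U n, U (r * n)) :=
  ⟨fun A => blockDiagU (fun k => if k = j then A else 1), by
    apply continuous_blockDiagU
    intro k
    by_cases hk : k = j
    · simp only [hk, if_true]; exact continuous_id
    · simp only [hk, if_false]; exact continuous_const⟩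

theorem sMap_one (n r : ℕ) (j : Fin r) : sMap n r j 1 = 1 := by
  show blockDiagU _ = 1
  have : (fun k : Fin r => if k = j then (1 : U n) else 1) = fun _ => (1 : U n) := by
    funext k; split <;> rfl
  rw [this, blockDiagU_one]

/-- The `r`-fold direct sum `⊕^r : U_n → U_{rn}`, `A ↦ diag(A, …, A)`. -/
def rSum (n r : ℕ) : C(U n, U (r * n)) :=
  ⟨fun A => blockDiagU (fun _ : Fin r => A), continuous_blockDiagU fun _ => continuous_id⟩

theorem rSum_one (n r : ℕ) : rSum n r 1 = 1 := blockDiagU_one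

/-- The direct sum `⊕ : U_m × U_n → U_{m+n}`, `(A, B) ↦ diag(A, B)`. -/
def dsum (m n : ℕ) : C(U m × U n, U (m + n)) :=
  ⟨fun p => bdiag2 p.1 p.2, continuous_bdiag2⟩

theorem dsum_one (m n : ℕ) : dsum m n 1 = 1 := bdiag2_one

/-- The tensor (Kronecker) product `⊗ : U_m × U_n → U_{mn}`. -/
def tens (m n : ℕ) : C(U m × U n, U (m * n)) :=
  ⟨fun p => kronU p.1 p.2, continuous_kronU⟩

theorem tens_one (m n : ℕ) : tens m n 1 = 1 := kronU_one

/-- `A ↦ A ⊗ I_n : U_m → U_{mn}`. -/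
def kronR (m n : ℕ) : C(U m, U (m * n)) :=
  ⟨fun A => kronU A 1, continuous_kronU.comp (continuous_id.prodMk continuous_const)⟩

/-- `A ↦ I_n ⊗ A : U_m → U_{mn}`. -/
def kronL (m n : ℕ) : C(U m, U (m * n)) :=
  ⟨fun A => uCast (Nat.mul_comm n m) (kronU 1 A),
    (continuous_uCast _).comp (continuous_kronU.comp (continuous_const.prodMk continuous_id))⟩

/-- The stabilization `σ : U_k → U_N`, `A ↦ diag(A, I_{N-k})`, for `k ≤ N`. -/
def sigmaMap (k N : ℕ) (h : k ≤ N) : C(U k, U N) :=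
  ⟨fun A => uCast (Nat.add_sub_cancel' h) (bdiag2 A 1),
    (continuous_uCast _).comp (continuous_bdiag2.comp (continuous_id.prodMk continuous_const))⟩

theorem sigmaMap_one (k N : ℕ) (h : k ≤ N) : sigmaMap k N h 1 = 1 := by
  show uCast _ (bdiag2 1 1) = 1
  rw [bdiag2_one, uCast_one]

/-- The `r`-fold Kronecker power `A ↦ A ⊗ ⋯ ⊗ A : U_k → U_{k^r}`. -/
def kronPow {k : ℕ} : (r : ℕ) → U k → U (k ^ r)
  | 0 => fun _ => uCast (pow_zero k).symm 1
  | r + 1 => fun A => uCast (pow_succ k r).symm (kronU (kronPow r A) A)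

theorem continuous_kronPow {k : ℕ} (r : ℕ) : Continuous fun A : U k => kronPow r A := by
  induction r with
  | zero => exact continuous_const
  | succ r ih =>
    show Continuous fun A : U k => uCast (pow_succ k r).symm (kronU (kronPow r A) A)
    exact (continuous_uCast _).comp (continuous_kronU.comp (ih.prodMk continuous_id))

theorem kronPow_one {k : ℕ} (r : ℕ) : kronPow r (1 : U k) = 1 := by
  induction r with
  | zero => exact uCast_one _
  | succ r ih =>
    show uCast _ (kronU (kronPow r 1) 1) = 1
    rw [ih, kronU_one, uCast_one]

/-- The `r`-fold Kronecker power as a continuous map. -/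
def kronPowC (n r : ℕ) : C(U n, U (n ^ r)) := ⟨kronPow r, continuous_kronPow r⟩

theorem kronPowC_one (n r : ℕ) : kronPowC n r 1 = 1 := kronPow_one r

end Paper
namespace Paper

/-!
`A ⊗ B = (A ⊗ I)(I ⊗ B)`, and in a topological group the pointwise product of maps induces the
product on homotopy groups, so `π(⊗)(x, y) = π(· ⊗ I)(x) · π(I ⊗ ·)(y)`. Up to a permutation of
coordinates, `A ⊗ I_n` and `I_m ⊗ A` are the block sum `diag(A, …, A)`, which is the pointwise
product of the maps placing `A` in a single diagonal block; each of these is `σ` up to a permutation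
of coordinates. Finally, permutation matrices lie in the identity component of the unitary group,
so conjugating by one does not change the induced map on homotopy groups.
-/

section HomotopyGroups

open Topology.Homotopy GenLoop

variable {X Y Z : Type} [TopologicalSpace X] [TopologicalSpace Y] [TopologicalSpace Z]

theorem πMap_comp {k : ℕ} (f : C(X, Y)) (g : C(Y, Z)) {x : X} {y : Y} {z : Z}
    (hf : f x = y) (hg : g y = z) (w : HomotopyGroup (Fin k) X x) :
    πMap k (g.comp f) (by rw [ContinuousMap.comp_apply, hf, hg]) w =
      πMap k g hg (πMap k f hf w) := by
  induction w using Quotient.inductionOn with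
  | h p => rfl

theorem πMap_eq_of_homotopyRel {k : ℕ} {f g : C(X, Y)} {x : X} {y : Y}
    (hf : f x = y) (hg : g x = y) (F : f.HomotopyRel g {x}) (z : HomotopyGroup (Fin k) X x) :
    πMap k f hf z = πMap k g hg z := by
  induction z using Quotient.inductionOn with
  | h p =>
    refine Quotient.sound ⟨⟨⟨⟨fun q => F (q.1, p q.2), by fun_prop⟩,
      fun t => F.apply_zero (p t), fun t => F.apply_one (p t)⟩, ?_⟩⟩
    intro t s hs
    show F (t, p s) = f (p s)
    rw [show p s = x from p.2 s hs]
    exact F.prop t x rfl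

theorem πMap_eq_one {k : ℕ} {G : Type} [TopologicalSpace G] [One G] {f : C(X, G)} {x₀ : X}
    (hf : f x₀ = 1) (hf1 : ∀ x, f x = 1) (z : HomotopyGroup (Fin (k + 1)) X x₀) : πMap (k + 1) f hf z = 1 := by
  induction z using Quotient.inductionOn with
  | h p =>
    rw [HomotopyGroup.one_def]
    exact congrArg _ (GenLoop.ext _ _ fun y => hf1 (p y))

variable {G : Type} [TopologicalSpace G] [Group G] [IsTopologicalGroup G]

def genLoopMul {N : Type} (p q : GenLoop N G 1) : GenLoop N G 1 :=
  ⟨p.1 * q.1, fun y hy => by rw [ContinuousMap.mul_apply, p.2 y hy, q.2 y hy, one_mul]⟩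

theorem genLoopMul_homotopic {N : Type} {p p' q q' : GenLoop N G 1}
    (hp : GenLoop.Homotopic p p') (hq : GenLoop.Homotopic q q') :
    GenLoop.Homotopic (genLoopMul p q) (genLoopMul p' q') := by
  obtain ⟨F⟩ := hp
  obtain ⟨K⟩ := hq
  refine ⟨⟨⟨⟨fun s => F s * K s, F.continuous.mul K.continuous⟩, fun y => ?_, fun y => ?_⟩,
    fun t y hy => ?_⟩⟩
  · simp [genLoopMul]
  · simp [genLoopMul]
  · have hF : F (t, y) = p y := F.prop t y hy
    have hK : K (t, y) = q y := K.prop t y hy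
    simp [genLoopMul, hF, hK]

/-- Eckmann–Hilton: after concatenating with constant loops, the pointwise product
`(p ⬝ const) * (const ⬝ q)` is the concatenation `q ⬝ p` on the nose. -/
theorem mk_genLoopMul {k : ℕ} (p q : GenLoop (Fin (k + 1)) G 1) :
    (⟦genLoopMul p q⟧ : HomotopyGroup (Fin (k + 1)) G 1) =
      ((· * ·) : _ → _ → HomotopyGroup (Fin (k + 1)) G 1) ⟦p⟧ ⟦q⟧ := by
  have hp : GenLoop.Homotopic p (transAt 0 const p) := by
    refine Quotient.exact (?_ : (⟦p⟧ : HomotopyGroup (Fin (k + 1)) G 1) = _)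
    rw [← HomotopyGroup.mul_spec]
    exact (mul_one (M := HomotopyGroup (Fin (k + 1)) G 1) _).symm
  have hq : GenLoop.Homotopic q (transAt 0 q const) := by
    refine Quotient.exact (?_ : (⟦q⟧ : HomotopyGroup (Fin (k + 1)) G 1) = _)
    rw [← HomotopyGroup.mul_spec]
    exact (one_mul (M := HomotopyGroup (Fin (k + 1)) G 1) _).symm
  have hswap : genLoopMul (transAt 0 const p) (transAt 0 q const) = transAt 0 q p := by
    ext y
    show (transAt 0 const p) y * (transAt 0 q const) y = (transAt 0 q p) y
    simp only [transAt, coe_copy]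
    split_ifs <;> simp only [const_apply, one_mul, mul_one]
  rw [HomotopyGroup.mul_spec (i := 0), ← hswap]
  exact Quotient.sound (genLoopMul_homotopic hp hq)

theorem πMap_mul {k : ℕ} {f g h : C(X, G)} {x₀ : X} (hf : f x₀ = 1) (hg : g x₀ = 1)
    (hh : h x₀ = 1) (hfgh : ∀ x, f x = g x * h x) (z : HomotopyGroup (Fin (k + 1)) X x₀) :
    πMap (k + 1) f hf z = πMap (k + 1) g hg z * πMap (k + 1) h hh z := by
  induction z using Quotient.inductionOn with
  | h p =>
    exact (congrArg _ (GenLoop.ext _ _ fun y => hfgh (p y))).trans (mk_genLoopMul _ _)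

theorem πMap_list_prod {k : ℕ} {J : Type} (F : J → C(X, G)) {x₀ : X} (hF : ∀ j, F j x₀ = 1)
    (l : List J) {f : C(X, G)} (hf : f x₀ = 1) (hfF : ∀ x, f x = (l.map fun j => F j x).prod)
    (z : HomotopyGroup (Fin (k + 1)) X x₀) :
    πMap (k + 1) f hf z = (l.map fun j => πMap (k + 1) (F j) (hF j) z).prod := by
  induction l generalizing f with
  | nil => simpa using πMap_eq_one hf hfF z
  | cons a l ih =>
    let g : C(X, G) := ⟨fun x => (l.map fun j => F j x).prod,
      continuous_list_prod _ fun j _ => (F j).continuous⟩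
    have hg : g x₀ = 1 := List.prod_eq_one (by simp [hF])
    rw [List.map_cons, List.prod_cons, πMap_mul hf (hF a) hg hfF,
      ih hg fun _ => rfl]

end HomotopyGroups

section Reindexing

variable {ι κ : Type} [Fintype ι] [DecidableEq ι] [Fintype κ] [DecidableEq κ]

theorem uReindex_refl (A : Matrix.unitaryGroup ι ℂ) : uReindex (Equiv.refl ι) A = A :=
  Subtype.ext (by simp)

theorem uReindex_mul (e : ι ≃ κ) (A B : Matrix.unitaryGroup ι ℂ) :
    uReindex e (A * B) = uReindex e A * uReindex e B :=
  Subtype.ext (Matrix.submatrix_mul_equiv _ _ _ _ _).symm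

def uReindexHom (e : ι ≃ κ) : Matrix.unitaryGroup ι ℂ →* Matrix.unitaryGroup κ ℂ where
  toFun := uReindex e
  map_one' := uReindex_one e
  map_mul' := uReindex_mul e

def permU (e : Equiv.Perm ι) : Matrix.unitaryGroup ι ℂ :=
  ⟨e.permMatrix ℂ, by
    rw [Matrix.mem_unitaryGroup_iff, Matrix.star_eq_conjTranspose, Matrix.conjTranspose_permMatrix,
      ← Matrix.permMatrix_mul, inv_mul_cancel, Matrix.permMatrix_one]⟩

theorem star_permU (e : Equiv.Perm ι) : star (permU e) = permU e⁻¹ :=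
  Subtype.ext (Matrix.conjTranspose_permMatrix e)

theorem permU_mul (e f : Equiv.Perm ι) : permU (e * f) = permU f * permU e :=
  Subtype.ext (Matrix.permMatrix_mul e f)

theorem uReindex_eq_permU_mul_mul_star (e : Equiv.Perm ι) (A : Matrix.unitaryGroup ι ℂ) :
    uReindex e A = permU e⁻¹ * A * star (permU e⁻¹) := by
  rw [star_permU, inv_inv]
  apply Subtype.ext
  change A.1.submatrix e.symm e.symm = e.symm.toPEquiv.toMatrix * A.1 * e.toPEquiv.toMatrix
  rw [PEquiv.toMatrix_toPEquiv_mul, PEquiv.mul_toMatrix_toPEquiv, Matrix.submatrix_submatrix]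
  rfl

/-- A self-adjoint unitary `S` is an involution, so `t ↦ ((1 + c) • 1 + (1 - c) • S) / 2` with
`c = exp (π t i)` runs through unitaries from `1` to `S`. -/
theorem joined_one_of_star_eq_self (S : Matrix.unitaryGroup ι ℂ) (hS : star S = S) :
    Joined 1 S := by
  let c : I → ℂ := fun t => Complex.exp ((Real.pi * t : ℝ) * Complex.I)
  have hc : ∀ t, c t * star (c t) = 1 := fun t => by
    rw [Complex.star_def, Complex.mul_conj, Complex.normSq_eq_norm_sq,
      Complex.norm_exp_ofReal_mul_I]
    simp
  have hS' : star S.1 = S.1 := congrArg Subtype.val hS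
  have hS2 : S.1 * S.1 = 1 := by simpa [hS'] using Matrix.mem_unitaryGroup_iff.mp S.2
  let γ : I → Matrix ι ι ℂ := fun t => ((1 + c t) / 2) • (1 : Matrix ι ι ℂ) + ((1 - c t) / 2) • S.1
  have mem : ∀ t, γ t ∈ Matrix.unitaryGroup ι ℂ := fun t => by
    rw [Matrix.mem_unitaryGroup_iff]
    simp only [γ, star_add, star_smul, star_one, hS', Matrix.add_mul, Matrix.mul_add,
      smul_mul_smul_comm, Matrix.one_mul, Matrix.mul_one, hS2]
    have h₁ : star ((1 + c t) / 2) = (1 + star (c t)) / 2 := by simp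
    have h₂ : star ((1 - c t) / 2) = (1 - star (c t)) / 2 := by simp
    have hc' := hc t
    calc _ = ((1 + c t) / 2 * star ((1 + c t) / 2) + (1 - c t) / 2 * star ((1 - c t) / 2)) •
            (1 : Matrix ι ι ℂ) + ((1 - c t) / 2 * star ((1 + c t) / 2) +
              (1 + c t) / 2 * star ((1 - c t) / 2)) • S.1 := by module
      _ = (1 : ℂ) • (1 : Matrix ι ι ℂ) + (0 : ℂ) • S.1 := by
          rw [h₁, h₂]
          congr 2
          · linear_combination hc' / 2
          · linear_combination -hc' / 2
      _ = 1 := by simp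
  refine ⟨⟨⟨fun t => ⟨γ t, mem t⟩, by fun_prop⟩, ?_, ?_⟩⟩
  · apply Subtype.ext
    simp [γ, c]
  · apply Subtype.ext
    simp [γ, c, Complex.exp_pi_mul_I]

theorem joined_one_permU (e : Equiv.Perm ι) : Joined 1 (permU e) := by
  induction e using Equiv.Perm.swap_induction_on with
  | one => rw [show permU (1 : Equiv.Perm ι) = 1 from Subtype.ext Matrix.permMatrix_one]
  | swap_mul f x y _ hf =>
    rw [permU_mul]
    simpa using hf.mul (joined_one_of_star_eq_self _ (by rw [star_permU, Equiv.swap_inv]))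

end Reindexing

/-- Conjugation by a path from `1` to the permutation matrix is a homotopy rel the basepoint. -/
theorem πMap_eq_of_eq_uReindex {ι : Type} [Fintype ι] [DecidableEq ι] {X : Type}
    [TopologicalSpace X] {k : ℕ} (e : Equiv.Perm ι) {f g : C(X, Matrix.unitaryGroup ι ℂ)}
    {x₀ : X} (hf : f x₀ = 1) (hg : g x₀ = 1) (hfg : ∀ x, g x = uReindex e (f x))
    (z : HomotopyGroup (Fin k) X x₀) : πMap k g hg z = πMap k f hf z := by
  obtain ⟨γ⟩ := joined_one_permU e⁻¹
  refine (πMap_eq_of_homotopyRel hf hg ⟨⟨⟨fun q => γ q.1 * f q.2 * star (γ q.1), by fun_prop⟩,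
    fun x => ?_, fun x => ?_⟩, ?_⟩ z).symm
  · simp
  · simp [hfg, uReindex_eq_permU_mul_mul_star]
  · rintro t x rfl
    simp [hf]

theorem blockDiagU_mul {r n : ℕ} (A B : Fin r → U n) :
    blockDiagU (A * B) = blockDiagU A * blockDiagU B := by
  apply Subtype.ext
  change Matrix.reindex _ _ (Matrix.blockDiagonal fun j => (A j).1 * (B j).1) =
    Matrix.reindex _ _ _ * Matrix.reindex _ _ _
  rw [Matrix.blockDiagonal_mul, Matrix.reindex_apply, Matrix.reindex_apply, Matrix.reindex_apply,
    Matrix.submatrix_mul_equiv]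

def blockDiagUHom (r n : ℕ) : (Fin r → U n) →* U (r * n) where
  toFun := blockDiagU
  map_one' := blockDiagU_one
  map_mul' := blockDiagU_mul

theorem sMap_apply (n r : ℕ) (j : Fin r) (A : U n) :
    sMap n r j A = blockDiagU (Pi.mulSingle j A) := by
  change blockDiagU _ = _
  congr 1
  funext k
  simp [Pi.mulSingle_apply]

theorem blockDiagU_const_eq_list_prod (n r : ℕ) (A : U n) :
    blockDiagU (fun _ : Fin r => A) = ((List.finRange r).map fun j => sMap n r j A).prod := by
  have hsingle : ((List.finRange r).map fun j => Pi.mulSingle j A).prod = fun _ : Fin r => A := by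
    funext k
    rw [Pi.list_prod_apply, List.map_map, List.prod_map_eq_pow_single k]
    · simp [List.count_eq_one_of_mem (List.nodup_finRange r) (List.mem_finRange k)]
    · intro j hj _
      exact Pi.mulSingle_eq_of_ne (M := fun _ : Fin r => U n) hj.symm A
  simp_rw [sMap_apply, ← hsingle]
  exact (map_list_prod (blockDiagUHom r n) _).trans (by rw [List.map_map]; rfl)

theorem submatrix_blockDiagonal_ite_eq_fromBlocks {m o β R : Type*} [DecidableEq m]
    [DecidableEq o] [DecidableEq β] [Zero R] [One R] (A : Matrix m m R) (j : o)
    (E : m ⊕ β ≃ m × o) (hE : ∀ i, E (.inl i) = (i, j)) :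
    (Matrix.blockDiagonal fun k => if k = j then A else 1).submatrix E E =
      Matrix.fromBlocks A 0 0 1 := by
  have hE' : ∀ b, (E (.inr b)).2 ≠ j := fun b h => by
    have := E.injective ((hE (E (.inr b)).1).trans
      (Prod.ext rfl h.symm : ((E (.inr b)).1, j) = E (.inr b))).symm
    exact Sum.inr_ne_inl this
  ext (a | a) (b | b)
  · simp [hE, Matrix.blockDiagonal_apply]
  · simp [hE, Matrix.blockDiagonal_apply, (hE' b).symm]
  · simp [hE, Matrix.blockDiagonal_apply, hE' a]
  · simp only [Matrix.submatrix_apply, Matrix.blockDiagonal_apply, hE' a, if_false,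
      Matrix.fromBlocks_apply₂₂, Matrix.one_apply, ← ite_and, and_comm, ← Prod.ext_iff,
      E.injective.eq_iff, Sum.inr.injEq]

theorem exists_equiv_sum_apply_inl {n r N : ℕ} (hN : N = r * n) (j : Fin r) :
    ∃ E : Fin n ⊕ Fin (N - n) ≃ Fin n × Fin r, ∀ i, E (.inl i) = (i, j) := by
  let P : Fin n × Fin r → Prop := fun p => p.2 = j
  let e₁ : Fin n ≃ {p // P p} :=
    { toFun i := ⟨(i, j), rfl⟩
      invFun p := p.1.1
      left_inv _ := rfl
      right_inv := by rintro ⟨⟨i, k⟩, rfl : k = j⟩; rfl }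
  have hcard : Fintype.card {p // ¬ P p} = N - n := by
    rw [Fintype.card_subtype_compl, ← Fintype.card_congr e₁]
    simp [hN, mul_comm]
  exact ⟨(Equiv.sumCongr e₁ (Fintype.equivFinOfCardEq hcard).symm).trans (Equiv.sumCompl P),
    fun _ => rfl⟩

theorem exists_perm_uReindex_sMap_eq {n r N : ℕ} (h : n ≤ N) (e : Fin (r * n) ≃ Fin N)
    (j : Fin r) : ∃ p : Equiv.Perm (Fin N),
      ∀ A, uReindex e (sMap n r j A) = uReindex p (sigmaMap n N h A) := by
  obtain ⟨E, hE⟩ := exists_equiv_sum_apply_inl (by simpa using (Fintype.card_congr e).symm) j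
  let c : Fin n ⊕ Fin (N - n) ≃ Fin N := finSumFinEquiv.trans (finCongr (Nat.add_sub_cancel' h))
  refine ⟨c.symm.trans (E.trans ((bde r n).trans e)), fun A => Subtype.ext ?_⟩
  change Matrix.reindex e e (Matrix.reindex (bde r n) (bde r n) _) =
    Matrix.reindex _ _ (Matrix.reindex (finCongr _) (finCongr _)
      (Matrix.reindex finSumFinEquiv finSumFinEquiv (Matrix.fromBlocks A.1 0 0 (1 : U (N - n)).1)))
  simp only [apply_ite Subtype.val, Matrix.UnitaryGroup.one_val]
  rw [← submatrix_blockDiagonal_ite_eq_fromBlocks A.1 j E hE]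
  ext a b
  simp [c]

theorem πMap_eq_pow_of_eq_uReindex_blockDiagU {k n r N : ℕ} (h : n ≤ N) (e : Fin (r * n) ≃ Fin N)
    {f : C(U n, U N)} (hf1 : f 1 = 1) (hf : ∀ A, f A = uReindex e (blockDiagU fun _ => A))
    (x : HomotopyGroup (Fin (k + 1)) (U n) 1) :
    πMap (k + 1) f hf1 x = πMap (k + 1) (sigmaMap n N h) (sigmaMap_one n N h) x ^ r := by
  let F : Fin r → C(U n, U N) := fun j =>
    ⟨fun A => uReindex e (sMap n r j A), (continuous_uReindex e).comp (sMap n r j).continuous⟩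
  have hF1 : ∀ j, F j 1 = 1 := fun j => by simp [F, sMap_one]
  have hfF : ∀ A, f A = ((List.finRange r).map fun j => F j A).prod := fun A => by
    rw [hf, blockDiagU_const_eq_list_prod]
    exact (map_list_prod (uReindexHom e) _).trans (by rw [List.map_map]; rfl)
  have hFσ : ∀ j, πMap (k + 1) (F j) (hF1 j) x =
      πMap (k + 1) (sigmaMap n N h) (sigmaMap_one n N h) x := fun j => by
    obtain ⟨p, hp⟩ := exists_perm_uReindex_sMap_eq h e j
    exact πMap_eq_of_eq_uReindex p _ _ hp x
  simp [πMap_list_prod F hF1 _ hf1 hfF, hFσ]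

theorem kronU_mul_kronU {m n : ℕ} (A : U m) (B : U n) :
    kronU A 1 * kronU 1 B = kronU A B := by
  apply Subtype.ext
  change Matrix.reindex _ _ (A.1 ⊗ₖ 1) * Matrix.reindex _ _ (1 ⊗ₖ B.1) = Matrix.reindex _ _ _
  rw [Matrix.reindex_apply, Matrix.reindex_apply, Matrix.reindex_apply,
    Matrix.submatrix_mul_equiv, ← Matrix.mul_kronecker_mul, Matrix.mul_one, Matrix.one_mul]

theorem kronU_one_left {m n : ℕ} (B : U n) : kronU (1 : U m) B = blockDiagU fun _ => B := by
  apply Subtype.ext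
  change Matrix.reindex _ _ (1 ⊗ₖ B.1) = Matrix.reindex _ _ _
  rw [Matrix.one_kronecker]
  ext a b
  simp [bde]

theorem kronU_one_right {m n : ℕ} (A : U m) :
    kronU A (1 : U n) =
      uReindex ((bde n m).symm.trans finProdFinEquiv) (blockDiagU fun _ => A) := by
  apply Subtype.ext
  change Matrix.reindex _ _ (A.1 ⊗ₖ 1) = Matrix.reindex _ _ (Matrix.reindex _ _ _)
  rw [Matrix.kronecker_one]
  ext a b
  simp

theorem tens_induced_stable_formula_general (m n : ℕ) (hm : 0 < m) (hn : 0 < n)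
    (i : ℕ) (z : HomotopyGroup (Fin (i + 1)) (U m × U n) 1) :
    πMap (i + 1) (tens m n) (tens_one m n) z =
      (πMap (i + 1) (sigmaMap m (m * n) (Nat.le_mul_of_pos_right m hn))
          (sigmaMap_one m (m * n) (Nat.le_mul_of_pos_right m hn))
          (πMap (i + 1) (ContinuousMap.fst : C(U m × U n, U m)) rfl z)) ^ n *
      (πMap (i + 1) (sigmaMap n (m * n) (Nat.le_mul_of_pos_left n hm))
          (sigmaMap_one n (m * n) (Nat.le_mul_of_pos_left n hm))
          (πMap (i + 1) (ContinuousMap.snd : C(U m × U n, U n)) rfl z)) ^ m := by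
  let kronOneLeft : C(U n, U (m * n)) :=
    ⟨kronU 1, continuous_kronU.comp (continuous_const.prodMk continuous_id)⟩
  rw [πMap_mul (tens_one m n) (g := (kronR m n).comp .fst) (h := kronOneLeft.comp .snd)
      kronU_one kronU_one (fun p => (kronU_mul_kronU p.1 p.2).symm) z,
    πMap_comp (y := (1 : U m)) _ _ rfl kronU_one, πMap_comp (y := (1 : U n)) _ _ rfl kronU_one,
    πMap_eq_pow_of_eq_uReindex_blockDiagU (Nat.le_mul_of_pos_right m hn) _ (f := kronR m n)
      kronU_one kronU_one_right,
    πMap_eq_pow_of_eq_uReindex_blockDiagU (Nat.le_mul_of_pos_left n hm) (Equiv.refl _)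
      (f := kronOneLeft) kronU_one fun B => (kronU_one_left B).trans (uReindex_refl _).symm]

/-- Let `m < n`. For `1 ≤ i < 2m` (written `i + 1` with `i + 1 < 2m`), the
Kronecker product `⊗ : U_m × U_n → U_{mn}` satisfies
`π_i(⊗)(x, y) = (π_i(σ_m)(x))^n · (π_i(σ_n)(y))^m` in the abelian group `π_i(U_{mn})`
(written multiplicatively; `g^k` is the `k`-th integer multiple), where
`σ_m : A ↦ diag(A, I_{mn-m})` and `σ_n : B ↦ diag(B, I_{mn-n})`. -/
theorem tens_induced_stable_formula (m n : ℕ) (hm : 0 < m) (hn : 0 < n) (hmn : m < n)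
    (i : ℕ) (hi : i + 1 < 2 * m)
    (z : HomotopyGroup (Fin (i + 1)) (U m × U n) 1) :
    πMap (i + 1) (tens m n) (tens_one m n) z =
      (πMap (i + 1) (sigmaMap m (m * n) (Nat.le_mul_of_pos_right m hn))
          (sigmaMap_one m (m * n) (Nat.le_mul_of_pos_right m hn))
          (πMap (i + 1) (ContinuousMap.fst : C(U m × U n, U m)) rfl z)) ^ n *
      (πMap (i + 1) (sigmaMap n (m * n) (Nat.le_mul_of_pos_left n hm))
          (sigmaMap_one n (m * n) (Nat.le_mul_of_pos_left n hm))
          (πMap (i + 1) (ContinuousMap.snd : C(U m × U n, U n)) rfl z)) ^ m :=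
  tens_induced_stable_formula_general m n hm hn i z

end Paper
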